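/- Let w_1,…,w_m ∈ R^d be nonzero vectors with pairwise nonnegative inner products and pairwise cosine similarities at most ξ ∈ [0,1]. Define φ(v) = Σ_{j=1}^m cos²(v, w_j) for nonzero v. Then sup over nonzero v of φ(v) is at most 1 + (m−1)ξ. -/

import Mathlib

/-!
Normalise `u j = ‖w j‖⁻¹ • w j`, put `c j = ⟪u j, x⟫` and `S = ∑ c j ^ 2`. Testing `x` against
`z = ∑ c j • u j` gives `S = ⟪z, x⟫ ≤ ‖z‖ ‖x‖`, while expanding `‖z‖²` and bounding the off-diagonal
Gram entries by `ξ` gives `‖z‖² ≤ (1 - ξ) S + ξ (∑ |c j|)² ≤ (1 + (m - 1) ξ) S`, the last step by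
Cauchy–Schwarz. Hence `S² ≤ (1 + (m - 1) ξ) S ‖x‖²`.
-/

open Finset

open scoped RealInnerProductSpace

theorem one_add_natCast_sub_one_mul_nonneg (n : ℕ) {ξ : ℝ} (hξ0 : 0 ≤ ξ) (hξ1 : ξ ≤ 1) :
    0 ≤ 1 + ((n : ℝ) - 1) * ξ := by
  nlinarith [(Nat.cast_nonneg n : (0 : ℝ) ≤ n)]

section GramBound

variable {ι E : Type*} [Fintype ι] [NormedAddCommGroup E] [InnerProductSpace ℝ E]
  {u : ι → E} {ξ : ℝ}

theorem norm_sum_smul_sq_le_of_abs_inner_le (hξ0 : 0 ≤ ξ) (hu : ∀ j, ‖u j‖ ≤ 1)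
    (hξ : ∀ j k, j ≠ k → |⟪u j, u k⟫| ≤ ξ) (c : ι → ℝ) :
    ‖∑ j, c j • u j‖ ^ 2 ≤ (1 + (Fintype.card ι - 1) * ξ) * ∑ j, c j ^ 2 := by
  classical
  have hgram : ∀ j k, |⟪u j, u k⟫| ≤ ξ + if j = k then 1 - ξ else 0 := by
    intro j k
    split_ifs with hjk
    · subst hjk
      rw [real_inner_self_eq_norm_sq, abs_sq]
      nlinarith [norm_nonneg (u j), hu j]
    · simpa using hξ j k hjk
  have hT : (∑ j, |c j|) ^ 2 ≤ Fintype.card ι * ∑ j, c j ^ 2 := by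
    simpa using sq_sum_le_card_mul_sum_sq (s := univ) (f := fun j => |c j|)
  calc ‖∑ j, c j • u j‖ ^ 2 = ∑ j, ∑ k, c j * c k * ⟪u j, u k⟫ := by
        rw [← real_inner_self_eq_norm_sq, sum_inner]
        simp only [inner_sum, real_inner_smul_left, real_inner_smul_right]
        exact sum_congr rfl fun j _ => sum_congr rfl fun k _ => by ring
    _ ≤ ∑ j, ∑ k, |c j| * |c k| * (ξ + if j = k then 1 - ξ else 0) := by
        refine sum_le_sum fun j _ => sum_le_sum fun k _ => ?_
        calc c j * c k * ⟪u j, u k⟫ ≤ |c j * c k * ⟪u j, u k⟫| := le_abs_self _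
          _ = |c j| * |c k| * |⟪u j, u k⟫| := by rw [abs_mul, abs_mul]
          _ ≤ _ := by gcongr; exact hgram j k
    _ = ξ * (∑ j, |c j|) ^ 2 + (1 - ξ) * ∑ j, c j ^ 2 := by
        rw [sq (∑ j, |c j|), sum_mul_sum, mul_sum, mul_sum]
        simp only [mul_add, sum_add_distrib, mul_ite, mul_zero, sum_ite_eq, mem_univ, if_true,
          abs_mul_abs_self]
        congr 1
        · simp only [mul_comm ξ, sum_mul]
        · exact sum_congr rfl fun j _ => by ring
    _ ≤ ξ * (Fintype.card ι * ∑ j, c j ^ 2) + (1 - ξ) * ∑ j, c j ^ 2 := by gcongr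
    _ = (1 + (Fintype.card ι - 1) * ξ) * ∑ j, c j ^ 2 := by ring

theorem sum_inner_sq_le_of_abs_inner_le (hξ0 : 0 ≤ ξ) (hξ1 : ξ ≤ 1) (hu : ∀ j, ‖u j‖ ≤ 1)
    (hξ : ∀ j k, j ≠ k → |⟪u j, u k⟫| ≤ ξ) (x : E) :
    ∑ j, ⟪u j, x⟫ ^ 2 ≤ (1 + (Fintype.card ι - 1) * ξ) * ‖x‖ ^ 2 := by
  set S := ∑ j, ⟪u j, x⟫ ^ 2
  set K : ℝ := 1 + (Fintype.card ι - 1) * ξ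
  have hK : 0 ≤ K := one_add_natCast_sub_one_mul_nonneg _ hξ0 hξ1
  have hz : ⟪∑ j, ⟪u j, x⟫ • u j, x⟫ = S := by
    simp only [S, sum_inner, real_inner_smul_left, sq]
  have hS : S ^ 2 ≤ K * S * ‖x‖ ^ 2 := by
    calc S ^ 2 = ⟪∑ j, ⟪u j, x⟫ • u j, x⟫ ^ 2 := by rw [hz]
      _ ≤ ‖∑ j, ⟪u j, x⟫ • u j‖ ^ 2 * ‖x‖ ^ 2 := by
          rw [← mul_pow, ← sq_abs]
          exact pow_le_pow_left₀ (abs_nonneg _) (abs_real_inner_le_norm _ _) 2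
      _ ≤ K * S * ‖x‖ ^ 2 := by
          gcongr
          exact norm_sum_smul_sq_le_of_abs_inner_le hξ0 hu hξ _
  rcases (sum_nonneg fun j _ => sq_nonneg ⟪u j, x⟫ : 0 ≤ S).eq_or_lt with hS_zero | hS_pos
  · linarith [mul_nonneg hK (sq_nonneg ‖x‖)]
  · nlinarith

theorem sum_inner_sq_div_norm_sq_mul_norm_sq_le {w : ι → E} (hξ0 : 0 ≤ ξ) (hξ1 : ξ ≤ 1)
    (hpos : ∀ j k, j ≠ k → 0 ≤ ⟪w j, w k⟫) (hcos : ∀ j k, j ≠ k → ⟪w j, w k⟫ ≤ ξ * ‖w j‖ * ‖w k‖)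
    (x : E) :
    ∑ j, ⟪x, w j⟫ ^ 2 / (‖x‖ ^ 2 * ‖w j‖ ^ 2) ≤ 1 + (Fintype.card ι - 1) * ξ := by
  -- `u j = 0` when `w j = 0`, which is why the Gram bound only asks for `‖u j‖ ≤ 1`
  set u : ι → E := fun j => ‖w j‖⁻¹ • w j
  have hu : ∀ j, ‖u j‖ ≤ 1 := fun j => by
    rw [norm_smul, norm_inv, norm_norm]
    exact inv_mul_le_one_of_le₀ le_rfl (norm_nonneg _)
  have hξ : ∀ j k, j ≠ k → |⟪u j, u k⟫| ≤ ξ := by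
    intro j k hjk
    have hjk' : ⟪u j, u k⟫ = ⟪w j, w k⟫ / (‖w j‖ * ‖w k‖) := by
      simp only [u, real_inner_smul_left, real_inner_smul_right]
      ring
    rw [hjk', abs_of_nonneg (by positivity [hpos j k hjk])]
    exact div_le_of_le_mul₀ (by positivity) hξ0 (by linarith [hcos j k hjk])
  have hterm : ∀ j, ⟪x, w j⟫ ^ 2 / (‖x‖ ^ 2 * ‖w j‖ ^ 2) = ⟪u j, x⟫ ^ 2 / ‖x‖ ^ 2 := fun j => by
    simp only [u, real_inner_smul_left, real_inner_comm x (w j)]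
    ring
  simp only [hterm, ← sum_div]
  exact div_le_of_le_mul₀ (sq_nonneg _) (one_add_natCast_sub_one_mul_nonneg _ hξ0 hξ1)
    (sum_inner_sq_le_of_abs_inner_le hξ0 hξ1 hu hξ x)

end GramBound

theorem stmt10_general {d m : ℕ} (w : Fin m → Fin d → ℝ) (ξ : ℝ)
    (hξ0 : 0 ≤ ξ) (hξ1 : ξ ≤ 1)
    (hpos : ∀ j k, j ≠ k → 0 ≤ ∑ l, w j l * w k l)
    (hcos : ∀ j k, j ≠ k →
      ∑ l, w j l * w k l ≤
        ξ * Real.sqrt (∑ l, (w j l) ^ 2) * Real.sqrt (∑ l, (w k l) ^ 2)) :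
    ∀ v : Fin d → ℝ, v ≠ 0 →
      ∑ j, (∑ l, v l * w j l) ^ 2 / ((∑ l, (v l) ^ 2) * (∑ l, (w j l) ^ 2))
        ≤ 1 + ((m : ℝ) - 1) * ξ := by
  intro v _
  have hinner (a b : Fin d → ℝ) : ∑ l, a l * b l = ⟪WithLp.toLp 2 a, WithLp.toLp 2 b⟫ := by
    simp [EuclideanSpace.inner_toLp_toLp, dotProduct, mul_comm]
  have hnorm_sq (a : Fin d → ℝ) : ∑ l, a l ^ 2 = ‖WithLp.toLp 2 a‖ ^ 2 := by
    simp [EuclideanSpace.real_norm_sq_eq]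
  have hnorm (a : Fin d → ℝ) : Real.sqrt (∑ l, a l ^ 2) = ‖WithLp.toLp 2 a‖ := by
    rw [hnorm_sq, Real.sqrt_sq (norm_nonneg _)]
  simp only [hnorm, hinner] at hpos hcos
  simp only [hinner, hnorm_sq]
  simpa using sum_inner_sq_div_norm_sq_mul_norm_sq_le
    (w := fun j => WithLp.toLp 2 (w j)) hξ0 hξ1 hpos hcos (WithLp.toLp 2 v)

theorem stmt10 {d m : ℕ} (w : Fin m → Fin d → ℝ) (ξ : ℝ)
    (hξ0 : 0 ≤ ξ) (hξ1 : ξ ≤ 1)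
    (hnz : ∀ j, w j ≠ 0)
    (hpos : ∀ j k, j ≠ k → 0 ≤ ∑ l, w j l * w k l)
    (hcos : ∀ j k, j ≠ k →
      ∑ l, w j l * w k l ≤
        ξ * Real.sqrt (∑ l, (w j l) ^ 2) * Real.sqrt (∑ l, (w k l) ^ 2)) :
    ∀ v : Fin d → ℝ, v ≠ 0 →
      ∑ j, (∑ l, v l * w j l) ^ 2 / ((∑ l, (v l) ^ 2) * (∑ l, (w j l) ^ 2))
        ≤ 1 + ((m : ℝ) - 1) * ξ :=
  stmt10_general w ξ hξ0 hξ1 hpos hcos
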